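/- arXiv:2407.14569 — 11 statements merged into one kernel-verified Lean document; each statement's English description precedes it below -/
import Mathlib

section
/- In a regular ordered semigroup S, S is left simple and π-regular if and only if any two ordered idempotents e, f of S are L-related (i.e., they generate the same principal left ideal (e ∪ Se] = (f ∪ Sf]). -/
/-!  Common framework: an ordered semigroup is a semigroup with a partial
order compatible with multiplication on both sides.  `pw a n` denotes the
power `a^(n+1)` (so the index `n : ℕ` ranges over the positive exponents). -/

variable {S : Type*}

/-- `pw a n = a^(n+1)`. -/
def pw [Semigroup S] (a : S) : ℕ → S
  | 0 => a
  | n + 1 => pw a n * a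

section Defs
variable [Semigroup S] [PartialOrder S]

/-- ordered idempotent : `e ≤ e²`. -/
def OrdIdem (e : S) : Prop := e ≤ e * e

/-- `b` is an ordered inverse of `a` : `a ≤ aba` and `b ≤ bab`. -/
def OrdInv (a b : S) : Prop := a ≤ a * b * a ∧ b ≤ b * a * b

/-- regular element : `a ∈ (aSa]`. -/
def Regular (a : S) : Prop := ∃ x : S, a ≤ a * x * a

/-- π-regular : every element has a regular (positive) power. -/
def PiRegular (S : Type*) [Semigroup S] [PartialOrder S] : Prop :=
  ∀ a : S, ∃ m : ℕ, Regular (pw a m)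

/-- principal left ideal `(a ∪ Sa]`. -/
def Lset (a : S) : Set S := {x | x ≤ a ∨ ∃ s : S, x ≤ s * a}

/-- principal right ideal `(a ∪ aS]`. -/
def Rset (a : S) : Set S := {x | x ≤ a ∨ ∃ s : S, x ≤ a * s}

/-- Green's relation `L`. -/
def GreenL (a b : S) : Prop := Lset a = Lset b

/-- Green's relation `R`. -/
def GreenR (a b : S) : Prop := Rset a = Rset b

/-- `m` is the least index (i.e. `m+1` is the least positive exponent) with `a^(m+1)` regular. -/
def LeastReg (a : S) (m : ℕ) : Prop := Regular (pw a m) ∧ ∀ k < m, ¬ Regular (pw a k)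

/-- generalized Green relation `L*`. -/
def GreenLStar (a b : S) : Prop :=
  ∃ m n : ℕ, LeastReg a m ∧ LeastReg b n ∧ GreenL (pw a m) (pw b n)

/-- generalized Green relation `R*`. -/
def GreenRStar (a b : S) : Prop :=
  ∃ m n : ℕ, LeastReg a m ∧ LeastReg b n ∧ GreenR (pw a m) (pw b n)

end Defs

theorem stmt0 [Semigroup S] [PartialOrder S] [CovariantClass S S (· * ·) (· ≤ ·)]
    [CovariantClass S S (Function.swap (· * ·)) (· ≤ ·)]
    (hreg : ∀ a : S, Regular a) :
    ((∀ a b : S, ∃ x : S, a ≤ x * b) ∧ PiRegular S) ↔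
      ∀ e f : S, OrdIdem e → OrdIdem f → GreenL e f := by
  constructor
  · rintro ⟨hls, -⟩ e f he hf
    ext x
    constructor
    · intro _; exact Or.inr (hls x f)
    · intro _; exact Or.inr (hls x e)
  · intro h
    refine ⟨?_, fun a => ⟨0, hreg a⟩⟩
    intro a b
    obtain ⟨x, hx⟩ := hreg a
    obtain ⟨y, hy⟩ := hreg b
    have he : OrdIdem (x * a) := by
      have := mul_le_mul_right hx x
      simpa [OrdIdem, mul_assoc] using this
    have hf : OrdIdem (y * b) := by
      have := mul_le_mul_right hy y
      simpa [OrdIdem, mul_assoc] using this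
    have hL := h (x * a) (y * b) he hf
    have ha : a ∈ Lset (x * a) := Or.inr ⟨a, by simpa [mul_assoc] using hx⟩
    rw [hL] at ha
    rcases ha with h1 | ⟨s, hs⟩
    · exact ⟨y, by simpa [mul_assoc] using h1⟩
    · exact ⟨s * y, by simpa [mul_assoc] using hs⟩
end

section
/- An ordered semigroup S is left π-t-simple (i.e., there exists a left simple, π-regular subsemigroup H of S such that every a ∈ S has a power a^m ∈ H) if and only if for every a, b ∈ S there exists m ∈ ℕ such that a^m ∈ (a^m S b]. -/
/-!  Common framework: an ordered semigroup is a semigroup with a partial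
order compatible with multiplication on both sides.  `pw a n` denotes the
power `a^(n+1)` (so the index `n : ℕ` ranges over the positive exponents). -/

variable {S : Type*}

/-!
If `H` is such a subsemigroup, pick a power `c = a^m ∈ H` with `c ≤ c z c`, `z ∈ H`, and a power
`b^n ∈ H`; left simplicity gives `z c ≤ h b^n`, hence `c ≤ c h b^n ∈ (c S b]`.

Conversely, the elements `h` with `h ∈ (h S b]` for every `b` form the required subsemigroup.
It is a left ideal of `S`, which yields closure, left simplicity and π-regularity at once; and if
`a^m ≤ a^m x a`, then `a^m ≤ a^m (x a)^j` for all `j`, so choosing `j` with `(x a)^j ∈ ((x a)^j S b]`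
shows `a^m ∈ (a^m S b]`.
-/

section Powers
variable [Semigroup S]

theorem pw_add (a : S) (i j : ℕ) : pw a i * pw a j = pw a (i + j + 1) := by
  induction j with
  | zero => rfl
  | succ j ih =>
    change pw a i * (pw a j * a) = pw a (i + j + 1) * a
    rw [← mul_assoc, ih]

theorem pw_pw (a : S) (m k : ℕ) : pw (pw a m) k = pw a (k * m + k + m) := by
  induction k with
  | zero => simp [pw]
  | succ k ih =>
    change pw (pw a m) k * pw a m = _
    rw [ih, pw_add]
    congr 1
    ring

theorem exists_mul_pw_eq_mul (y b : S) : ∀ n : ℕ, ∃ x : S, y * pw b n = x * b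
  | 0 => ⟨y, rfl⟩
  | n + 1 => ⟨y * pw b n, (mul_assoc _ _ _).symm⟩

theorem pw_mem_of_mul_mem {H : Set S} (hmul : ∀ a ∈ H, ∀ b ∈ H, a * b ∈ H) {h : S} (hh : h ∈ H) :
    ∀ k : ℕ, pw h k ∈ H
  | 0 => hh
  | k + 1 => hmul _ (pw_mem_of_mul_mem hmul hh k) _ hh

theorem le_mul_pw_of_le_mul [PartialOrder S] [MulRightMono S] {c u : S} (h : c ≤ c * u) :
    ∀ k : ℕ, c ≤ c * pw u k
  | 0 => h
  | k + 1 =>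
    calc c ≤ c * u := h
      _ ≤ c * pw u k * u := by gcongr; exact le_mul_pw_of_le_mul h k
      _ = c * pw u (k + 1) := mul_assoc _ _ _

end Powers

section Ordered
variable [Semigroup S] [PartialOrder S] [MulLeftMono S]

theorem exists_pw_le_pw_mul_mul_of_leftSimple {H : Set S}
    (hmul : ∀ a ∈ H, ∀ b ∈ H, a * b ∈ H) (hsimple : ∀ a ∈ H, ∀ b ∈ H, ∃ h ∈ H, a ≤ h * b)
    (hreg : ∀ a ∈ H, ∃ m : ℕ, ∃ z ∈ H, pw a m ≤ pw a m * z * pw a m)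
    (hpow : ∀ a : S, ∃ m : ℕ, pw a m ∈ H) (a b : S) :
    ∃ (m : ℕ) (x : S), pw a m ≤ pw a m * x * b := by
  obtain ⟨m, ham⟩ := hpow a
  obtain ⟨k, z, hz, hc⟩ := hreg _ ham
  set c := pw (pw a m) k with hc_def
  obtain ⟨n, hbn⟩ := hpow b
  obtain ⟨h, -, hzc⟩ := hsimple _ (hmul _ hz _ (pw_mem_of_mul_mem hmul ham k)) _ hbn
  obtain ⟨x, hx⟩ := exists_mul_pw_eq_mul h b n
  refine ⟨k * m + k + m, x, ?_⟩
  rw [← pw_pw, ← hc_def]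
  calc c ≤ c * z * c := hc
    _ = c * (z * c) := mul_assoc _ _ _
    _ ≤ c * (h * pw b n) := by gcongr
    _ = c * x * b := by rw [hx, mul_assoc]

/-- `h ∈ (h S b]` for every `b`. -/
def RightDivisible (h : S) : Prop := ∀ b : S, ∃ x : S, h ≤ h * x * b

theorem RightDivisible.mul_left {q : S} (hq : RightDivisible q) (p : S) :
    RightDivisible (p * q) := fun b => by
  obtain ⟨x, hx⟩ := hq b
  refine ⟨x, ?_⟩
  calc p * q ≤ p * (q * x * b) := by gcongr
    _ = p * q * x * b := by simp only [mul_assoc]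

theorem RightDivisible.exists_le_mul {p q : S} (hp : RightDivisible p) (hq : RightDivisible q) :
    ∃ h, RightDivisible h ∧ p ≤ h * q := by
  obtain ⟨x, hx⟩ := hp (q * q)
  exact ⟨p * x * q, hq.mul_left _, by rwa [← mul_assoc] at hx⟩

theorem RightDivisible.exists_le_mul_mul {p : S} (hp : RightDivisible p) :
    ∃ z, RightDivisible z ∧ p ≤ p * z * p := by
  obtain ⟨y, hy⟩ := hp (p * p)
  exact ⟨y * p, hp.mul_left y, by rwa [← mul_assoc, mul_assoc p y p] at hy⟩

theorem exists_rightDivisible_pw [MulRightMono S]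
    (hyp : ∀ a b : S, ∃ (m : ℕ) (x : S), pw a m ≤ pw a m * x * b) (a : S) :
    ∃ m : ℕ, RightDivisible (pw a m) := by
  obtain ⟨m, x, hx⟩ := hyp a a
  have hpow : ∀ j, pw a m ≤ pw a m * pw (x * a) j :=
    le_mul_pw_of_le_mul (by rwa [mul_assoc] at hx)
  refine ⟨m, fun b => ?_⟩
  obtain ⟨j, y, hy⟩ := hyp (x * a) b
  refine ⟨pw (x * a) j * y, ?_⟩
  calc pw a m ≤ pw a m * pw (x * a) j := hpow j
    _ ≤ pw a m * (pw (x * a) j * y * b) := by gcongr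
    _ = pw a m * (pw (x * a) j * y) * b := by simp only [mul_assoc]

end Ordered

theorem stmt1 [Semigroup S] [PartialOrder S] [CovariantClass S S (· * ·) (· ≤ ·)]
    [CovariantClass S S (Function.swap (· * ·)) (· ≤ ·)] :
    (∃ H : Set S,
        (∀ a ∈ H, ∀ b ∈ H, a * b ∈ H) ∧
        (∀ a ∈ H, ∀ b ∈ H, ∃ h ∈ H, a ≤ h * b) ∧
        (∀ a ∈ H, ∃ m : ℕ, ∃ z ∈ H, pw a m ≤ pw a m * z * pw a m) ∧
        (∀ a : S, ∃ m : ℕ, pw a m ∈ H)) ↔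
      ∀ a b : S, ∃ (m : ℕ) (x : S), pw a m ≤ pw a m * x * b := by
  constructor
  · rintro ⟨H, hmul, hsimple, hreg, hpow⟩
    exact exists_pw_le_pw_mul_mul_of_leftSimple hmul hsimple hreg hpow
  · intro hyp
    exact ⟨{h | RightDivisible h}, fun _ _ _ hq => hq.mul_left _,
      fun _ hp _ hq => hp.exists_le_mul hq, fun _ hp => ⟨0, hp.exists_le_mul_mul⟩,
      exists_rightDivisible_pw hyp⟩
end

section
/- If for every a, b in an ordered semigroup S there exists m ∈ ℕ with a^m ∈ (a^m S b], then for every a, b ∈ S there exists m ∈ ℕ such that a^m ∈ (a^m S b^n] for every n ∈ ℕ. -/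
/-!  Common framework: an ordered semigroup is a semigroup with a partial
order compatible with multiplication on both sides.  `pw a n` denotes the
power `a^(n+1)` (so the index `n : ℕ` ranges over the positive exponents). -/

variable {S : Type*}

theorem stmt2 [Semigroup S] [PartialOrder S] [CovariantClass S S (· * ·) (· ≤ ·)]
    [CovariantClass S S (Function.swap (· * ·)) (· ≤ ·)]
    (h : ∀ a b : S, ∃ (m : ℕ) (x : S), pw a m ≤ pw a m * x * b) :
    ∀ a b : S, ∃ m : ℕ, ∀ n : ℕ, ∃ x : S, pw a m ≤ pw a m * x * pw b n := by
  intro a b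
  obtain ⟨m, x₀, hm⟩ := h a b
  refine ⟨m, fun n => ?_⟩
  set c : S := x₀ * b with hc
  have hbase : pw a m ≤ pw a m * c := by
    rw [hc, ← mul_assoc]; exact hm
  have key : ∀ j : ℕ, pw a m ≤ pw a m * pw c j := by
    intro j
    induction j with
    | zero => exact hbase
    | succ j ih =>
        calc pw a m ≤ pw a m * c := hbase
          _ ≤ (pw a m * pw c j) * c := mul_le_mul_left ih c
          _ = pw a m * pw c (j + 1) := by rw [mul_assoc]; rfl
  obtain ⟨k, y, hk⟩ := h c (pw b n)
  refine ⟨pw c k * y, ?_⟩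
  calc pw a m ≤ pw a m * pw c k := key k
    _ ≤ pw a m * (pw c k * y * pw b n) := mul_le_mul_right hk _
    _ = pw a m * (pw c k * y) * pw b n := by simp only [mul_assoc]
end

section
/- Let S be a π-regular ordered semigroup in which ab L* ba for all a, b ∈ S (where L* is the generalized Green relation). Then S is right weakly commutative: for all a, b ∈ S there exists n ∈ ℕ with (ab)^n ∈ (Sa]. -/
/-!  Common framework: an ordered semigroup is a semigroup with a partial
order compatible with multiplication on both sides.  `pw a n` denotes the
power `a^(n+1)` (so the index `n : ℕ` ranges over the positive exponents). -/

variable {S : Type*}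

theorem stmt4 [Semigroup S] [PartialOrder S] [CovariantClass S S (· * ·) (· ≤ ·)]
    [CovariantClass S S (Function.swap (· * ·)) (· ≤ ·)]
    (hpi : PiRegular S)
    (h : ∀ a b : S, GreenLStar (a * b) (b * a)) :
    ∀ a b : S, ∃ (n : ℕ) (x : S), pw (a * b) n ≤ x * a := by
  intro a b
  obtain ⟨m, n, _, _, hL⟩ := h a b
  have key : ∀ k : ℕ, ∃ y : S, pw (b * a) k = y * a := by
    intro k
    induction k with
    | zero => exact ⟨b, rfl⟩
    | succ k ih =>
      obtain ⟨y, hy⟩ := ih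
      exact ⟨pw (b * a) k * b, by simp [pw, mul_assoc]⟩
  obtain ⟨y, hy⟩ := key n
  have hmem : pw (a * b) m ∈ Lset (pw (b * a) n) := by
    rw [← hL]; exact Or.inl le_rfl
  rcases hmem with h1 | ⟨s, h2⟩
  · exact ⟨m, y, by rw [← hy]; exact h1⟩
  · exact ⟨m, s * y, by rw [mul_assoc, ← hy]; exact h2⟩
end

section
/- Let S be a π-regular ordered semigroup such that for all ordered idempotents e, f there exists n with (ef)^n ∈ (fSf]. Then for all e, f ∈ E≤(S) there exists n ∈ ℕ with ((ef)^n S] ⊆ (eS] ∩ (fS]. -/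
/-!  Common framework: an ordered semigroup is a semigroup with a partial
order compatible with multiplication on both sides.  `pw a n` denotes the
power `a^(n+1)` (so the index `n : ℕ` ranges over the positive exponents). -/

variable {S : Type*}

theorem stmt6 [Semigroup S] [PartialOrder S] [CovariantClass S S (· * ·) (· ≤ ·)]
    [CovariantClass S S (Function.swap (· * ·)) (· ≤ ·)]
    (hpi : PiRegular S)
    (h : ∀ e f : S, OrdIdem e → OrdIdem f →
        ∃ (n : ℕ) (x : S), pw (e * f) n ≤ f * x * f) :
    ∀ e f : S, OrdIdem e → OrdIdem f → ∃ n : ℕ, ∀ y : S,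
      (∃ s : S, y ≤ pw (e * f) n * s) →
        (∃ s : S, y ≤ e * s) ∧ (∃ s : S, y ≤ f * s) := by
  intro e f he hf
  obtain ⟨n, x, hx⟩ := h e f he hf
  have hfac : ∀ m : ℕ, ∃ t : S, pw (e * f) m = e * t := by
    intro m
    induction m with
    | zero => exact ⟨f, rfl⟩
    | succ k ih =>
      obtain ⟨t, ht⟩ := ih
      exact ⟨t * (e * f), by simp [pw, ht, mul_assoc]⟩
  refine ⟨n, fun y ⟨s, hs⟩ => ?_⟩
  obtain ⟨t, ht⟩ := hfac n
  constructor
  · exact ⟨t * s, by rw [ht, mul_assoc] at hs; exact hs⟩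
  · refine ⟨x * f * s, le_trans hs ?_⟩
    calc pw (e * f) n * s ≤ f * x * f * s := mul_le_mul_left hx s
    _ = f * (x * f * s) := by simp [mul_assoc]
end

section
/- Let S be a π-regular ordered semigroup such that for all ordered idempotents e, f there is n with ((ef)^n S] ⊆ (eS] ∩ (fS]. Then for every e ∈ E≤(S), x ∈ S, m ∈ ℕ and x' ∈ V≤(x^m): if x^m ∈ (Se] then x' ∈ (eS]. -/
/-!  Common framework: an ordered semigroup is a semigroup with a partial
order compatible with multiplication on both sides.  `pw a n` denotes the
power `a^(n+1)` (so the index `n : ℕ` ranges over the positive exponents). -/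

variable {S : Type*}

theorem stmt7 [Semigroup S] [PartialOrder S] [CovariantClass S S (· * ·) (· ≤ ·)]
    [CovariantClass S S (Function.swap (· * ·)) (· ≤ ·)]
    (hpi : PiRegular S)
    (h : ∀ e f : S, OrdIdem e → OrdIdem f → ∃ n : ℕ, ∀ y : S,
        (∃ s : S, y ≤ pw (e * f) n * s) →
          (∃ s : S, y ≤ e * s) ∧ (∃ s : S, y ≤ f * s)) :
    ∀ (e x : S) (m : ℕ) (x' : S), OrdIdem e → OrdInv (pw x m) x' →
      (∃ s : S, pw x m ≤ s * e) → ∃ s : S, x' ≤ e * s := by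
  intro e x m x' he hinv hse
  obtain ⟨s, hs⟩ := hse
  set a := pw x m with ha
  obtain ⟨-, hx'⟩ := hinv
  -- f := x' * a
  have hf : x' * a ≤ x' * a * (x' * a) := by
    calc x' * a ≤ x' * a * x' * a := mul_le_mul_left hx' a
    _ = x' * a * (x' * a) := by simp only [mul_assoc]
  set g := x' * a * x' * s * e with hg
  have hf2g : x' * a * (x' * a) ≤ g := by
    have : x' * a * x' * a ≤ x' * a * x' * (s * e) := mul_le_mul_right hs _
    calc x' * a * (x' * a) = x' * a * x' * a := by simp only [mul_assoc]
    _ ≤ x' * a * x' * (s * e) := this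
    _ = g := by simp only [hg, mul_assoc]
  have hfg : x' * a ≤ g := hf.trans hf2g
  have hxg : x' ≤ g * x' := by
    calc x' ≤ x' * a * x' := hx'
    _ ≤ x' * a * (x' * a * x') := mul_le_mul_right hx' _
    _ = x' * a * (x' * a) * x' := by simp only [mul_assoc]
    _ ≤ g * x' := mul_le_mul_left hf2g x'
  have hgidem : OrdIdem g := by
    have h1 : g ≤ x' * a * g := by
      calc g = x' * a * (x' * s * e) := by simp only [hg, mul_assoc]
      _ ≤ x' * a * (x' * a) * (x' * s * e) := mul_le_mul_left hf _
      _ = x' * a * (x' * a * (x' * s * e)) := by simp only [mul_assoc]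
      _ = x' * a * g := by simp only [hg, mul_assoc]
    exact h1.trans (mul_le_mul_left hfg g)
  have hge : g ≤ g * e := by
    calc g = x' * a * x' * s * e := hg
    _ ≤ x' * a * x' * s * (e * e) := mul_le_mul_right he _
    _ = g * e := by simp only [hg, mul_assoc]
  have hpow : ∀ n : ℕ, g ≤ pw (g * e) n := by
    intro n
    induction n with
    | zero => exact hge
    | succ k ih =>
      calc g ≤ g * g := hgidem
      _ ≤ pw (g * e) k * (g * e) := mul_le_mul' ih hge
      _ = pw (g * e) (k + 1) := rfl
  obtain ⟨n, H⟩ := h g e hgidem he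
  exact (H x' ⟨x', hxg.trans (mul_le_mul_left (hpow n) x')⟩).2
end

section
/- In a regular ordered semigroup S, if for every element a any two ordered inverses a', a'' ∈ V≤(a) satisfy a' R a'', then for any a ∈ S and any a' ∈ V≤(a), the sets satisfy (Sa] = (Sa'a]. -/
/-!  Common framework: an ordered semigroup is a semigroup with a partial
order compatible with multiplication on both sides.  `pw a n` denotes the
power `a^(n+1)` (so the index `n : ℕ` ranges over the positive exponents). -/

variable {S : Type*}

theorem stmt9 [Semigroup S] [PartialOrder S] [CovariantClass S S (· * ·) (· ≤ ·)]
    [CovariantClass S S (Function.swap (· * ·)) (· ≤ ·)]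
    (hreg : ∀ a : S, Regular a)
    (h : ∀ a a' a'' : S, OrdInv a a' → OrdInv a a'' → GreenR a' a'') :
    ∀ a a' : S, OrdInv a a' →
      {x : S | ∃ s : S, x ≤ s * a} = {x : S | ∃ s : S, x ≤ s * (a' * a)} := by
  intro a a' ha
  ext x
  constructor
  · rintro ⟨s, hs⟩
    exact ⟨s * a, hs.trans (by calc s * a ≤ s * (a * a' * a) := mul_le_mul_right ha.1 s
                                    _ = s * a * (a' * a) := by simp [mul_assoc])⟩
  · rintro ⟨s, hs⟩
    exact ⟨s * a', by rw [mul_assoc]; exact hs⟩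
end

section
/- Let S be a right π-inverse ordered semigroup and a, b ∈ S with a L* b. Let m, n be the smallest positive integers such that a^m, b^n are regular, and let a' ∈ V≤(a^m), b' ∈ V≤(b^n). Then a'a^m R* b'b^n. -/
/-!  Common framework: an ordered semigroup is a semigroup with a partial
order compatible with multiplication on both sides.  `pw a n` denotes the
power `a^(n+1)` (so the index `n : ℕ` ranges over the positive exponents). -/

variable {S : Type*}

section Aux
variable [Semigroup S] [PartialOrder S] [CovariantClass S S (· * ·) (· ≤ ·)]
    [CovariantClass S S (Function.swap (· * ·)) (· ≤ ·)]

theorem leastReg_unique {a : S} {m n : ℕ} (hm : LeastReg a m) (hn : LeastReg a n) : m = n := by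
  rcases lt_trichotomy m n with h | h | h
  · exact absurd hm.1 (hn.2 m h)
  · exact h
  · exact absurd hn.1 (hm.2 n h)

theorem lset_mono {x y : S} (h : x ∈ Lset y) : Lset x ⊆ Lset y := by
  intro z hz
  rcases hz with hz | ⟨s, hz⟩ <;> rcases h with h | ⟨t, h⟩
  · exact Or.inl (le_trans hz h)
  · exact Or.inr ⟨t, le_trans hz h⟩
  · exact Or.inr ⟨s, le_trans hz (mul_le_mul_right h s)⟩
  · exact Or.inr ⟨s * t, le_trans hz (by
      calc s * x ≤ s * (t * y) := mul_le_mul_right h s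
        _ = s * t * y := (mul_assoc s t y).symm)⟩

theorem green_l_of_ordinv {x x' : S} (h : OrdInv x x') : GreenL (x' * x) x := by
  have h1 : x' * x ∈ Lset x := Or.inr ⟨x', le_refl _⟩
  have h2 : x ∈ Lset (x' * x) := Or.inr ⟨x, by
    calc x ≤ x * x' * x := h.1
      _ = x * (x' * x) := mul_assoc _ _ _⟩
  exact Set.Subset.antisymm (lset_mono h1) (lset_mono h2)

theorem ordIdem_of_ordinv {x x' : S} (h : OrdInv x x') : OrdIdem (x' * x) := by
  calc x' * x ≤ x' * (x * x' * x) := mul_le_mul_right h.1 x'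
    _ = (x' * x) * (x' * x) := by simp only [mul_assoc]

theorem leastReg_zero_of_ordIdem {e : S} (he : OrdIdem e) : LeastReg e 0 := by
  refine ⟨⟨e, ?_⟩, fun k hk => absurd hk (Nat.not_lt_zero k)⟩
  calc (pw e 0) = e := rfl
    _ ≤ e * e := he
    _ ≤ e * (e * e) := mul_le_mul_right he e
    _ = pw e 0 * e * pw e 0 := by simp [pw, mul_assoc]

end Aux

theorem stmt10 [Semigroup S] [PartialOrder S] [CovariantClass S S (· * ·) (· ≤ ·)]
    [CovariantClass S S (Function.swap (· * ·)) (· ≤ ·)]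
    (hpi : PiRegular S)
    (hrinv : ∀ e f : S, OrdIdem e → OrdIdem f → GreenLStar e f → GreenRStar e f)
    (a b : S) (hab : GreenLStar a b)
    (m n : ℕ) (hm : LeastReg a m) (hn : LeastReg b n)
    (a' b' : S) (ha' : OrdInv (pw a m) a') (hb' : OrdInv (pw b n) b') :
    GreenRStar (a' * pw a m) (b' * pw b n) := by
  obtain ⟨m', n', hm', hn', hL⟩ := hab
  have em : m' = m := leastReg_unique hm' hm
  have en : n' = n := leastReg_unique hn' hn
  rw [em, en] at hL
  have he : OrdIdem (a' * pw a m) := ordIdem_of_ordinv ha'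
  have hf : OrdIdem (b' * pw b n) := ordIdem_of_ordinv hb'
  apply hrinv _ _ he hf
  refine ⟨0, 0, leastReg_zero_of_ordIdem he, leastReg_zero_of_ordIdem hf, ?_⟩
  show Lset (a' * pw a m) = Lset (b' * pw b n)
  calc Lset (a' * pw a m) = Lset (pw a m) := green_l_of_ordinv ha'
    _ = Lset (pw b n) := hL
    _ = Lset (b' * pw b n) := (green_l_of_ordinv hb').symm
end

section
/- Let S be a π-regular ordered semigroup. If for every a ∈ S and every pair of ordered inverses a', a'' of a suitable power a^m one has a' R a'', and if e, f are ordered idempotents with e L f, then e R f. (That is, condition (2) of the right π-inverse characterization implies condition: L-related idempotents are R-related.) -/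
/-!  Common framework: an ordered semigroup is a semigroup with a partial
order compatible with multiplication on both sides.  `pw a n` denotes the
power `a^(n+1)` (so the index `n : ℕ` ranges over the positive exponents). -/

variable {S : Type*}

section Aux
variable [Semigroup S] [PartialOrder S] [CovariantClass S S (· * ·) (· ≤ ·)]
    [CovariantClass S S (Function.swap (· * ·)) (· ≤ ·)]

private lemma pw_ge {a : S} (haa : a ≤ a * a) : ∀ m : ℕ, a ≤ pw a m
  | 0 => le_rfl
  | n + 1 => haa.trans (mul_le_mul_left (pw_ge haa n) a)

private lemma pw_le_left {a c : S} (h : a ≤ c * a) : ∀ m : ℕ, pw a m ≤ c * pw a m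
  | 0 => h
  | n + 1 => by
      show pw a n * a ≤ c * (pw a n * a)
      calc pw a n * a ≤ (c * pw a n) * a := mul_le_mul_left (pw_le_left h n) a
        _ = c * (pw a n * a) := mul_assoc _ _ _

private lemma pw_le_right {a c : S} (h : a ≤ a * c) : ∀ m : ℕ, pw a m ≤ pw a m * c
  | 0 => h
  | n + 1 => by
      show pw a n * a ≤ (pw a n * a) * c
      calc pw a n * a ≤ pw a n * (a * c) := mul_le_mul_right h _
        _ = (pw a n * a) * c := (mul_assoc _ _ _).symm

/-- If `e' ≤ a`, `a ≤ e'·a`, `a ≤ a·(c·e')` and `e' ≤ e'²`, then both `e'` and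
`c·e'` are ordered inverses of every positive power of `a`. -/
private lemma pair {a e' c : S} (h1 : e' ≤ a) (h2 : a ≤ e' * a)
    (h3 : a ≤ a * (c * e')) (he : e' ≤ e' * e') (m : ℕ) :
    OrdInv (pw a m) e' ∧ OrdInv (pw a m) (c * e') := by
  set A := pw a m with hA
  have haa : a ≤ a * a := h2.trans (mul_le_mul_left h1 a)
  have he'A : e' ≤ A := h1.trans (pw_ge haa m)
  have hAe : A ≤ e' * A := pw_le_left h2 m
  have hAA : A ≤ A * A := hAe.trans (mul_le_mul_left he'A A)
  have hAg : A ≤ A * (c * e') := pw_le_right h3 m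
  constructor
  · constructor
    · -- A ≤ A * e' * A
      calc A ≤ A * A := hAA
        _ ≤ A * (e' * A) := mul_le_mul_right hAe A
        _ = A * e' * A := (mul_assoc _ _ _).symm
    · -- e' ≤ e' * A * e'
      calc e' ≤ e' * e' := he
        _ ≤ e' * (e' * e') := mul_le_mul_right he e'
        _ = (e' * e') * e' := (mul_assoc _ _ _).symm
        _ ≤ (e' * A) * e' := mul_le_mul_left (mul_le_mul_right he'A e') e'
  · constructor
    · -- A ≤ A * (c * e') * A
      calc A ≤ A * A := hAA
        _ ≤ (A * (c * e')) * A := mul_le_mul_left hAg A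
    · -- c*e' ≤ (c*e') * A * (c*e')
      have step : e' ≤ e' * (A * (c * e')) := by
        calc e' ≤ e' * e' := he
          _ ≤ e' * A := mul_le_mul_right he'A e'
          _ ≤ e' * (A * (c * e')) := mul_le_mul_right hAg e'
      calc c * e' ≤ c * (e' * (A * (c * e'))) := mul_le_mul_right step c
        _ = (c * e') * (A * (c * e')) := (mul_assoc _ _ _).symm
        _ = ((c * e') * A) * (c * e') := (mul_assoc _ _ _).symm

private lemma rset_mono {u v : S} (h : u ∈ Rset v) : Rset u ⊆ Rset v := by
  intro w hw
  rcases hw with hw | ⟨s, hs⟩ <;> rcases h with h' | ⟨t, ht⟩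
  · exact Or.inl (hw.trans h')
  · exact Or.inr ⟨t, hw.trans ht⟩
  · exact Or.inr ⟨s, hs.trans (mul_le_mul_left h' s)⟩
  · refine Or.inr ⟨t * s, hs.trans ?_⟩
    calc u * s ≤ (v * t) * s := mul_le_mul_left ht s
      _ = v * (t * s) := mul_assoc _ _ _

end Aux

theorem stmt12 [Semigroup S] [PartialOrder S] [CovariantClass S S (· * ·) (· ≤ ·)]
    [CovariantClass S S (Function.swap (· * ·)) (· ≤ ·)]
    (hpi : PiRegular S)
    (h : ∀ a : S, ∃ m : ℕ, ∀ a' a'' : S,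
        OrdInv (pw a m) a' → OrdInv (pw a m) a'' → GreenR a' a'') :
    ∀ e f : S, OrdIdem e → OrdIdem f → GreenL e f → GreenR e f := by
  intro e f he hf hL
  -- extract x with e ≤ x*f and y with f ≤ y*e
  have hfLe : f ∈ Lset e := by rw [hL]; exact Or.inl le_rfl
  have heLf : e ∈ Lset f := by rw [← hL]; exact Or.inl le_rfl
  obtain ⟨y, hfye⟩ : ∃ y : S, f ≤ y * e := by
    rcases hfLe with h' | ⟨y, hy⟩
    · exact ⟨f, hf.trans (mul_le_mul_right h' f)⟩
    · exact ⟨y, hy⟩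
  obtain ⟨x, hexf⟩ : ∃ x : S, e ≤ x * f := by
    rcases heLf with h' | ⟨x, hx⟩
    · exact ⟨e, he.trans (mul_le_mul_right h' e)⟩
    · exact ⟨x, hx⟩
  -- first application: a := e*(x*f), inverses e and y*e
  have hfRe : f ∈ Rset e := by
    obtain ⟨m, hm⟩ := h (e * (x * f))
    have h1 : e ≤ e * (x * f) := he.trans (mul_le_mul_right hexf e)
    have h2 : e * (x * f) ≤ e * (e * (x * f)) := by
      calc e * (x * f) ≤ (e * e) * (x * f) := mul_le_mul_left he _
        _ = e * (e * (x * f)) := mul_assoc _ _ _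
    have h3 : e * (x * f) ≤ (e * (x * f)) * (y * e) := by
      have : f ≤ f * (y * e) := hf.trans (mul_le_mul_right hfye f)
      calc e * (x * f) ≤ e * (x * (f * (y * e))) := by
            exact mul_le_mul_right (mul_le_mul_right this x) e
        _ = (e * (x * f)) * (y * e) := by rw [← mul_assoc, ← mul_assoc, mul_assoc e x f]
    obtain ⟨inv_e, inv_ye⟩ := pair h1 h2 h3 he m
    have hEq : GreenR e (y * e) := hm e (y * e) inv_e inv_ye
    rw [hEq]
    exact Or.inl hfye
  -- second application: b := f*(y*e), inverses f and x*f
  have heRf : e ∈ Rset f := by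
    obtain ⟨n, hn⟩ := h (f * (y * e))
    have h1 : f ≤ f * (y * e) := hf.trans (mul_le_mul_right hfye f)
    have h2 : f * (y * e) ≤ f * (f * (y * e)) := by
      calc f * (y * e) ≤ (f * f) * (y * e) := mul_le_mul_left hf _
        _ = f * (f * (y * e)) := mul_assoc _ _ _
    have h3 : f * (y * e) ≤ (f * (y * e)) * (x * f) := by
      have : e ≤ e * (x * f) := he.trans (mul_le_mul_right hexf e)
      calc f * (y * e) ≤ f * (y * (e * (x * f))) := by
            exact mul_le_mul_right (mul_le_mul_right this y) f
        _ = (f * (y * e)) * (x * f) := by rw [← mul_assoc, ← mul_assoc, mul_assoc f y e]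
    obtain ⟨inv_f, inv_xf⟩ := pair h1 h2 h3 hf n
    have hEq : GreenR f (x * f) := hn f (x * f) inv_f inv_xf
    rw [hEq]
    exact Or.inl hexf
  exact Set.Subset.antisymm (rset_mono heRf) (rset_mono hfRe)
end

section
/- Let S be a π-regular ordered semigroup and suppose every two ordered idempotents of S are L*-related (S has an L*-unique ordered idempotent). Then any two elements a, b of S are L*-related; in particular there exist m, n ∈ ℕ and s₁, s₂ ∈ S with a^m ≤ s₁ b^n and b^n ≤ s₂ a^m. -/
/-!  Common framework: an ordered semigroup is a semigroup with a partial
order compatible with multiplication on both sides.  `pw a n` denotes the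
power `a^(n+1)` (so the index `n : ℕ` ranges over the positive exponents). -/

variable {S : Type*}

section Aux
variable [Semigroup S] [PartialOrder S] [CovariantClass S S (· * ·) (· ≤ ·)]
    [CovariantClass S S (Function.swap (· * ·)) (· ≤ ·)]

lemma mem_Lset_self (a : S) : a ∈ Lset a := Or.inl le_rfl

lemma Lset_subset {a b : S} (h : a ∈ Lset b) : Lset a ⊆ Lset b := by
  intro x hx
  rcases hx with hx | ⟨s, hs⟩
  · rcases h with h | ⟨t, ht⟩
    · exact Or.inl (hx.trans h)
    · exact Or.inr ⟨t, hx.trans ht⟩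
  · rcases h with h | ⟨t, ht⟩
    · exact Or.inr ⟨s, hs.trans (mul_le_mul_right h s)⟩
    · exact Or.inr ⟨s * t, by rw [mul_assoc]; exact hs.trans (mul_le_mul_right ht s)⟩

lemma greenL_of {a b : S} (h1 : a ∈ Lset b) (h2 : b ∈ Lset a) : GreenL a b :=
  Set.Subset.antisymm (Lset_subset h1) (Lset_subset h2)

lemma le_pw_idem {e : S} (he : OrdIdem e) : ∀ p, e ≤ pw e p
  | 0 => le_rfl
  | p + 1 => he.trans (mul_le_mul_left (le_pw_idem he p) e)

lemma greenL_pw_idem {e : S} (he : OrdIdem e) (p : ℕ) : GreenL e (pw e p) := by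
  refine greenL_of (Or.inl (le_pw_idem he p)) ?_
  cases p with
  | zero => exact Or.inl le_rfl
  | succ p => exact Or.inr ⟨pw e p, le_rfl⟩

lemma exists_idem_greenL {a : S} (ha : Regular a) :
    ∃ e : S, OrdIdem e ∧ GreenL a e := by
  obtain ⟨x, hx⟩ := ha
  refine ⟨x * a, ?_, greenL_of ?_ (Or.inr ⟨x, le_rfl⟩)⟩
  · have := mul_le_mul_right hx x
    unfold OrdIdem
    calc x * a ≤ x * (a * x * a) := this
      _ = (x * a) * (x * a) := by simp [mul_assoc]
  · exact Or.inr ⟨a, by rw [← mul_assoc]; exact hx⟩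

lemma exists_leastReg (hpi : PiRegular S) (a : S) : ∃ m : ℕ, LeastReg a m := by
  classical
  obtain ⟨m, hm⟩ := hpi a
  have hex : ∃ m : ℕ, Regular (pw a m) := ⟨m, hm⟩
  exact ⟨Nat.find hex, Nat.find_spec hex, fun k hk => Nat.find_min hex hk⟩

end Aux

theorem stmt16 [Semigroup S] [PartialOrder S] [CovariantClass S S (· * ·) (· ≤ ·)]
    [CovariantClass S S (Function.swap (· * ·)) (· ≤ ·)]
    (hpi : PiRegular S)
    (h : ∀ e f : S, OrdIdem e → OrdIdem f → GreenLStar e f) :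
    ∀ a b : S, GreenLStar a b ∧
      ∃ (m n : ℕ) (s₁ s₂ : S), pw a m ≤ s₁ * pw b n ∧ pw b n ≤ s₂ * pw a m := by
  intro a b
  obtain ⟨m, hm⟩ := exists_leastReg hpi a
  obtain ⟨n, hn⟩ := exists_leastReg hpi b
  obtain ⟨e, he, hae⟩ := exists_idem_greenL hm.1
  obtain ⟨f, hf, hbf⟩ := exists_idem_greenL hn.1
  obtain ⟨p, q, -, -, hef⟩ := h e f he hf
  have hLef : GreenL e f := ((greenL_pw_idem he p).trans hef).trans (greenL_pw_idem hf q).symm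
  have hAB : GreenL (pw a m) (pw b n) := (hae.trans hLef).trans hbf.symm
  have key : ∀ A B : S, Regular A → Lset A = Lset B → ∃ s : S, A ≤ s * B := by
    intro A B ⟨x, hx⟩ hEq
    have hA : A ∈ Lset B := hEq ▸ mem_Lset_self A
    rcases hA with hA | ⟨t, ht⟩
    · exact ⟨A * x, hx.trans (mul_le_mul_right hA (A * x))⟩
    · exact ⟨A * x * t, by rw [mul_assoc]; exact hx.trans (mul_le_mul_right ht (A * x))⟩
  obtain ⟨s₁, hs₁⟩ := key (pw a m) (pw b n) hm.1 hAB
  obtain ⟨s₂, hs₂⟩ := key (pw b n) (pw a m) hn.1 hAB.symm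
  exact ⟨⟨m, n, hm, hn, hAB⟩, m, n, s₁, s₂, hs₁, hs₂⟩
end

section
/- Let S be a π-regular ordered semigroup. If x' ∈ V≤(x^m) and x^m ≤ se for some s ∈ S and ordered idempotent e, then x'se is an ordered idempotent: x'se ≤ (x'se)². -/
/-!  Common framework: an ordered semigroup is a semigroup with a partial
order compatible with multiplication on both sides.  `pw a n` denotes the
power `a^(n+1)` (so the index `n : ℕ` ranges over the positive exponents). -/

variable {S : Type*}

theorem stmt19 [Semigroup S] [PartialOrder S] [CovariantClass S S (· * ·) (· ≤ ·)]
    [CovariantClass S S (Function.swap (· * ·)) (· ≤ ·)]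
    (hpi : PiRegular S)
    (x x' s e : S) (m : ℕ)
    (hinv : OrdInv (pw x m) x') (he : OrdIdem e)
    (hse : pw x m ≤ s * e) :
    OrdIdem (x' * s * e) := by
  unfold OrdIdem
  calc x' * s * e ≤ x' * pw x m * x' * s * e :=
        mul_le_mul_left (mul_le_mul_left hinv.2 s) e
    _ ≤ x' * (s * e) * x' * s * e :=
        mul_le_mul_left (mul_le_mul_left (mul_le_mul_left
          (mul_le_mul_right hse x') x') s) e
    _ = (x' * s * e) * (x' * s * e) := by simp [mul_assoc]
end
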